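/- (The fixed point of T is a componentwise lower bound for V.) If v* ∈ ℝ^S satisfies Tv* = v*, then for every v ∈ ℝ^S with Tv ≤ v one has v* ≤ v (componentwise); that is, v* ≤ v for all v ∈ V. -/

import Mathlib

/-!
If `vstar - v` attains its maximum `M` at `i₀`, then `vstar ≤ v + M`, and since `T` is monotone
and shifts constants by the factor `λ`, `M = (T vstar - v) i₀ ≤ (T v + λ M - v) i₀ ≤ λ M`.
With `0 ≤ λ < 1` this forces `M ≤ 0`.
-/

noncomputable def Tval {S : Type*} [Fintype S] {A : S → Type*}
    [∀ i, Fintype (A i)] [∀ i, Nonempty (A i)]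
    (r : ∀ i, A i → ℝ) (p : ∀ i, A i → S → ℝ) (lam : ℝ) (v : S → ℝ) (i : S) : ℝ :=
  Finset.univ.sup' Finset.univ_nonempty fun a : A i =>
    r i a + lam * ∑ j, p i a j * v j

lemma sum_mul_le_sum_mul_add_of_le_add {ι : Type*} [Fintype ι] {w u v : ι → ℝ} {c : ℝ}
    (hw : ∀ j, 0 ≤ w j) (hw1 : ∑ j, w j = 1) (h : ∀ j, u j ≤ v j + c) :
    ∑ j, w j * u j ≤ ∑ j, w j * v j + c :=
  calc ∑ j, w j * u j ≤ ∑ j, w j * (v j + c) :=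
        Finset.sum_le_sum fun j _ => mul_le_mul_of_nonneg_left (h j) (hw j)
    _ = ∑ j, w j * v j + c := by
        simp only [mul_add, Finset.sum_add_distrib, ← Finset.sum_mul, hw1, one_mul]

lemma Tval_le_add_of_le_add {S : Type*} [Fintype S] {A : S → Type*}
    [∀ i, Fintype (A i)] [∀ i, Nonempty (A i)]
    {r : ∀ i, A i → ℝ} {p : ∀ i, A i → S → ℝ} {lam : ℝ}
    (hp : ∀ i (a : A i) (j : S), 0 ≤ p i a j) (hp1 : ∀ i (a : A i), ∑ j, p i a j = 1)
    (hlam0 : 0 ≤ lam) {u v : S → ℝ} {c : ℝ} (h : ∀ j, u j ≤ v j + c) (i : S) :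
    Tval r p lam u i ≤ Tval r p lam v i + lam * c := by
  refine Finset.sup'_le _ _ fun a _ => ?_
  calc r i a + lam * ∑ j, p i a j * u j
      ≤ r i a + lam * (∑ j, p i a j * v j + c) := by
        gcongr
        exact sum_mul_le_sum_mul_add_of_le_add (hp i a) (hp1 i a) h
    _ = (r i a + lam * ∑ j, p i a j * v j) + lam * c := by ring
    _ ≤ Tval r p lam v i + lam * c := by
        gcongr
        exact Finset.le_sup' (fun a : A i => r i a + lam * ∑ j, p i a j * v j) (Finset.mem_univ a)

theorem fixedPoint_le_of_mem_V_general {S : Type*} [Fintype S] {A : S → Type*}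
    [∀ i, Fintype (A i)] [∀ i, Nonempty (A i)]
    (r : ∀ i, A i → ℝ) (p : ∀ i, A i → S → ℝ) (lam : ℝ)
    (hp : ∀ i (a : A i) (j : S), 0 ≤ p i a j)
    (hp1 : ∀ i (a : A i), ∑ j, p i a j = 1)
    (hlam0 : 0 ≤ lam) (hlam1 : lam < 1)
    (vstar : S → ℝ) (hfix : ∀ i, Tval r p lam vstar i = vstar i) :
    ∀ v : S → ℝ, (∀ i, Tval r p lam v i ≤ v i) → ∀ i, vstar i ≤ v i := by
  intro v hv i
  obtain ⟨i₀, -, hi₀⟩ := Finset.exists_max_image Finset.univ (fun j => vstar j - v j)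
    ⟨i, Finset.mem_univ i⟩
  set M := vstar i₀ - v i₀
  have hle : ∀ j, vstar j ≤ v j + M := fun j => by linarith [hi₀ j (Finset.mem_univ j)]
  have hM : M ≤ lam * M := by
    have : Tval r p lam vstar i₀ ≤ Tval r p lam v i₀ + lam * M :=
      Tval_le_add_of_le_add hp hp1 hlam0 hle i₀
    linarith [hfix i₀, hv i₀]
  have hM0 : M ≤ 0 := by nlinarith
  linarith [hi₀ i (Finset.mem_univ i)]

theorem fixedPoint_le_of_mem_V {S : Type*} [Fintype S] [Nonempty S] {A : S → Type*}
    [∀ i, Fintype (A i)] [∀ i, Nonempty (A i)]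
    (r : ∀ i, A i → ℝ) (p : ∀ i, A i → S → ℝ) (lam : ℝ)
    (hp : ∀ i (a : A i) (j : S), 0 ≤ p i a j)
    (hp1 : ∀ i (a : A i), ∑ j, p i a j = 1)
    (hlam0 : 0 ≤ lam) (hlam1 : lam < 1)
    (vstar : S → ℝ) (hfix : ∀ i, Tval r p lam vstar i = vstar i) :
    ∀ v : S → ℝ, (∀ i, Tval r p lam v i ≤ v i) → ∀ i, vstar i ≤ v i :=
  fixedPoint_le_of_mem_V_general r p lam hp hp1 hlam0 hlam1 vstar hfix
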